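/- arXiv:2211.07220 — 2 statements merged into one kernel-verified Lean document; each statement's English description precedes it below -/
import Mathlib

section
/- Let U be concave and let C, C' : ℝ^l₊ → ℝ be differentiable with C concave, and suppose ∇C(R) = p*. Then the feasible trade set of C at reserves R, {Δ' ≥ 0 : C(R + Δ - Δ') ≥ C(R)}, restricted to trades staying in [0,R]^l componentwise, is contained in the budget set {Δ' ≥ 0 : p*·Δ' ≤ p*·Δ}. Consequently the maximal utility achievable trading against C is at most the maximal utility on the linear budget set: U(ζ(Δ,R,C)) ≤ U(ζ(Δ,p*)). -/
open Matrix Set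

theorem ConcaveOn.le_add_fderiv {E : Type*} [NormedAddCommGroup E] [NormedSpace ℝ E]
    {f : E → ℝ} {s : Set E} (hf : ConcaveOn ℝ s f) {x v : E} {f' : E →L[ℝ] ℝ}
    (hx : x ∈ s) (hxv : x + v ∈ s) (hf' : HasFDerivAt f f' x) :
    f (x + v) ≤ f x + f' v := by
  let line : ℝ →ᵃ[ℝ] E := AffineMap.lineMap x (x + v)
  have hline : ∀ t : ℝ, line t = x + t • v := fun t => by
    simp [line, AffineMap.lineMap_apply, add_comm]
  have hconc : ConcaveOn ℝ (line ⁻¹' s) (f ∘ line) := hf.comp_affineMap line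
  have hderiv : HasDerivAt (f ∘ line) (f' v) 0 := by
    have hcurve : HasDerivAt (fun t : ℝ => x + t • v) v 0 := by
      simpa using ((hasDerivAt_id (0 : ℝ)).smul_const v).const_add x
    rw [show (line : ℝ → E) = fun t => x + t • v from funext hline]
    exact hf'.comp_hasDerivAt_of_eq 0 hcurve (by simp)
  have hslope := hconc.slope_le_of_hasDerivAt (x := 0) (y := 1)
    (by simp [hline, hx]) (by simp [hline, hxv]) zero_lt_one hderiv
  have hslope' : f (x + v) - f x ≤ f' v := by simpa [slope, hline] using hslope
  linarith

/-- Budget-set containment for concave CFMM invariants: if `C` is concave and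
differentiable with marginal price `∇C(R) = p*`, then every nonnegative final
bundle `Δ'` feasible against the CFMM (with the net trade staying in `[0,R]`
componentwise) satisfies the linear budget constraint `p*·Δ' ≤ p*·Δ`; hence
the CFMM trade utility is bounded by the Walrasian utility `U(ζ(Δ,p*))`. -/
theorem cfmm_feasible_subset_budget (l : ℕ) (C U : (Fin l → ℝ) → ℝ)
    (hCconc : ConcaveOn ℝ Set.univ C) (hCdiff : Differentiable ℝ C)
    (p R Δ : Fin l → ℝ)
    (hgrad : ∀ v, fderiv ℝ C R v = p ⬝ᵥ v)
    (ζW : Fin l → ℝ)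
    (hζW : ∀ x : Fin l → ℝ, (∀ i, 0 ≤ x i) → p ⬝ᵥ x ≤ p ⬝ᵥ Δ → U x ≤ U ζW) :
    ∀ Δ' : Fin l → ℝ, (∀ i, 0 ≤ Δ' i) →
      (∀ i, 0 ≤ Δ i - Δ' i + R i ∧ Δ i - Δ' i + R i ≤ 2 * R i) →
      C (R + Δ - Δ') ≥ C R →
      p ⬝ᵥ Δ' ≤ p ⬝ᵥ Δ ∧ U Δ' ≤ U ζW := by
  intro Δ' hΔ' _ hfeas
  have htangent : C (R + (Δ - Δ')) ≤ C R + p ⬝ᵥ (Δ - Δ') := by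
    rw [← hgrad]
    exact hCconc.le_add_fderiv (mem_univ _) (mem_univ _) (hCdiff R).hasFDerivAt
  have hbudget : p ⬝ᵥ Δ' ≤ p ⬝ᵥ Δ := by
    rw [add_sub_assoc] at hfeas
    rw [dotProduct_sub] at htangent
    linarith
  exact ⟨hbudget, hζW Δ' hΔ' hbudget⟩
end

section
/- For the constant sum market maker C(x) = p*·x with reserves R large enough that R - Δ' + Δ stays nonnegative for all relevant trades, the trader's optimal CFMM trade achieves exactly the Walrasian utility: U(ζ(Δ,R,C)) = U(ζ(Δ,p*)). Combined with the upper bound for concave C with ∇C(R)=p*, the constant sum market maker locally maximizes trader utility among all concave CFMMs with marginal price p*. -/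
open Matrix

/-- Local welfare optimality of the constant sum market maker: with invariant
`C(x) = p*·x` and reserves large enough that the Walrasian demand `ζW` is a
feasible CFMM trade, the trader's optimal trade against the CFMM achieves
exactly the Walrasian utility `U(ζ(Δ,p*))`. -/
theorem constant_sum_achieves_walrasian (l : ℕ) (U : (Fin l → ℝ) → ℝ)
    (hUconc : ConcaveOn ℝ Set.univ U)
    (hUmono : ∀ x y : Fin l → ℝ, (∀ i, x i ≤ y i) → x ≠ y → U x < U y)
    (p R Δ : Fin l → ℝ) (hp : ∀ i, 0 < p i)
    (hΔ : ∀ i, 0 ≤ Δ i) (hR : ∀ i, 0 ≤ R i)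
    (ζW : Fin l → ℝ) (hζWpos : ∀ i, 0 ≤ ζW i)
    (hζWbudget : p ⬝ᵥ ζW = p ⬝ᵥ Δ)
    (hζWopt : ∀ x : Fin l → ℝ, (∀ i, 0 ≤ x i) → p ⬝ᵥ x = p ⬝ᵥ Δ → U x ≤ U ζW)
    (hbig : ∀ i, 0 ≤ R i + Δ i - ζW i) :
    -- the Walrasian demand is a feasible CFMM trade
    (p ⬝ᵥ (R + Δ - ζW) ≥ p ⬝ᵥ R) ∧
    -- and it is optimal among all feasible CFMM trades
    (∀ Δ' : Fin l → ℝ, (∀ i, 0 ≤ Δ' i) →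
      p ⬝ᵥ (R + Δ - Δ') ≥ p ⬝ᵥ R → U Δ' ≤ U ζW) := by
  constructor
  · have : p ⬝ᵥ (R + Δ - ζW) = p ⬝ᵥ R + p ⬝ᵥ Δ - p ⬝ᵥ ζW := by
      simp [dotProduct_add, dotProduct_sub]
    rw [this, hζWbudget]; linarith
  · intro Δ' hΔ'pos hfeas
    have hle : p ⬝ᵥ Δ' ≤ p ⬝ᵥ Δ := by
      have : p ⬝ᵥ (R + Δ - Δ') = p ⬝ᵥ R + p ⬝ᵥ Δ - p ⬝ᵥ Δ' := by
        simp [dotProduct_add, dotProduct_sub]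
      rw [this] at hfeas; linarith
    rcases Nat.eq_zero_or_pos l with hl | hl
    · subst hl
      have : Δ' = ζW := by funext i; exact absurd i.2 (by omega)
      rw [this]
    · set i0 : Fin l := ⟨0, hl⟩
      set c : ℝ := (p ⬝ᵥ Δ - p ⬝ᵥ Δ') / p i0 with hc
      have hc0 : 0 ≤ c := div_nonneg (by linarith) (hp i0).le
      set x : Fin l → ℝ := fun i => if i = i0 then Δ' i + c else Δ' i with hx
      have hxge : ∀ i, Δ' i ≤ x i := by
        intro i
        simp only [hx]
        split <;> linarith
      have hxpos : ∀ i, 0 ≤ x i := fun i => le_trans (hΔ'pos i) (hxge i)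
      have hxbudget : p ⬝ᵥ x = p ⬝ᵥ Δ := by
        have : p ⬝ᵥ x = p ⬝ᵥ Δ' + p i0 * c := by
          simp only [dotProduct, hx]
          have : ∀ i : Fin l, p i * (if i = i0 then Δ' i + c else Δ' i)
              = p i * Δ' i + (if i = i0 then p i * c else 0) := by
            intro i; split <;> ring
          simp_rw [this]
          rw [Finset.sum_add_distrib, Finset.sum_ite_eq' Finset.univ i0 (fun i => p i * c)]
          simp
        rw [this, hc, mul_div_cancel₀ _ (hp i0).ne']
        ring
      have hUx : U Δ' ≤ U x := by
        rcases eq_or_ne Δ' x with h | h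
        · rw [h]
        · exact (hUmono Δ' x hxge h).le
      exact le_trans hUx (hζWopt x hxpos hxbudget)
end
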